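/- Let (L, η) be a lasso on Grph which is not vertex-trivial, i.e. for some graph the vertex map of the corresponding component of η is not a bijection. Then for every graph G: (i) two vertices of G have the same image under the vertex map of η_G if and only if they lie in the same connected component of G (with respect to the connectivity relation); (ii) the vertex map of η_G is surjective, so L(G) has exactly one vertex per connected component of G; and (iii) every edge of L(G) is a loop (its source equals its target). -/

import Mathlib

open CategoryTheory CategoryTheory.Limits

/-- The category of directed multigraphs, realized as the functor category from the
walking parallel pair (objects `zero` = edges, `one` = vertices; morphisms
`left` = source, `right` = target) to `Type`. -/
abbrev Grph : Type 1 := WalkingParallelPair ⥤ Type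

namespace Grph

/-- The source map of a graph. -/
def src (G : Grph) : G.obj .zero → G.obj .one := G.map .left

/-- The target map of a graph. -/
def tgt (G : Grph) : G.obj .zero → G.obj .one := G.map .right

/-- The connectivity relation on the vertices of a graph: the equivalence relation
generated by relating `u` and `v` whenever some edge has source `u` and target `v`. -/
def connRel (G : Grph) : G.obj .one → G.obj .one → Prop :=
  Relation.EqvGen fun u v => ∃ e, G.src e = u ∧ G.tgt e = v

lemma connRel_map {G H : Grph} (φ : G ⟶ H) {u v : G.obj .one} (h : G.connRel u v) :
    H.connRel (φ.app .one u) (φ.app .one v) := by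
  induction h with
  | rel u v h =>
      obtain ⟨e, he, he'⟩ := h
      refine Relation.EqvGen.rel _ _ ⟨φ.app .zero e, ?_, ?_⟩
      · rw [← he]; exact (types_congr_hom (φ.naturality WalkingParallelPairHom.left) e).symm
      · rw [← he']; exact (types_congr_hom (φ.naturality WalkingParallelPairHom.right) e).symm
  | refl u => exact Relation.EqvGen.refl _
  | symm u v _ ih => exact Relation.EqvGen.symm _ _ ih
  | trans u v w _ _ ih₁ ih₂ => exact Relation.EqvGen.trans _ _ _ ih₁ ih₂

/-- The graph obtained from `G` by quotienting its vertex set by the connectivity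
relation; its edge set is that of `G`. -/
def ccObj (G : Grph) : Grph :=
  parallelPair (TypeCat.ofHom fun e => Quot.mk G.connRel (G.src e))
    (TypeCat.ofHom fun e => Quot.mk G.connRel (G.tgt e))

/-- The action of the connected components construction on graph homomorphisms. -/
def ccMap {G H : Grph} (φ : G ⟶ H) : ccObj G ⟶ ccObj H :=
  parallelPairHom _ _ _ _ (φ.app .zero)
    (TypeCat.ofHom (Quot.map (φ.app .one) (fun _ _ h => connRel_map φ h)))
    (by
      ext e
      exact congrArg (Quot.mk H.connRel)
        (types_congr_hom (φ.naturality WalkingParallelPairHom.left) e))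
    (by
      ext e
      exact congrArg (Quot.mk H.connRel)
        (types_congr_hom (φ.naturality WalkingParallelPairHom.right) e))

/-- The connected components functor `cc : Grph ⥤ Grph`. -/
def cc : Grph ⥤ Grph where
  obj := ccObj
  map := ccMap
  map_id G := by
    apply NatTrans.ext
    funext x
    cases x
    · ext; rfl
    · ext q
      induction q using Quot.ind
      rfl
  map_comp φ ψ := by
    apply NatTrans.ext
    funext x
    cases x
    · ext; rfl
    · ext q
      induction q using Quot.ind
      rfl

/-- The quotient homomorphism `π_G : G ⟶ cc(G)` (identity on edges). -/
def ccπ (G : Grph) : G ⟶ cc.obj G where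
  app x := match x with
    | .zero => TypeCat.ofHom fun e => e
    | .one => TypeCat.ofHom fun v => Quot.mk G.connRel v
  naturality := by
    intro X Y f
    change WalkingParallelPairHom X Y at f
    cases f with
    | id =>
        show G.map (𝟙 _) ≫ _ = _ ≫ (cc.obj G).map (𝟙 _)
        rw [CategoryTheory.Functor.map_id, CategoryTheory.Functor.map_id,
          Category.id_comp, Category.comp_id]
    | left => rfl
    | right => rfl

/-- The graph with one vertex and two loop edges. -/
def twoLoops : Grph := parallelPair (TypeCat.ofHom fun _ : Bool => PUnit.unit)
  (TypeCat.ofHom fun _ : Bool => PUnit.unit)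

/-- The terminal graph: one vertex with a single loop edge. -/
def oneLoop : Grph := parallelPair (TypeCat.ofHom fun _ : PUnit => PUnit.unit)
  (TypeCat.ofHom fun _ : PUnit => PUnit.unit)

end Grph

/-- A lasso on a category `C`: an endofunctor preserving pushouts of spans of
monomorphisms, together with a natural transformation from the identity functor all of
whose components are epimorphisms. -/
structure Lasso (C : Type u) [Category.{v} C] where
  /-- The underlying endofunctor. -/
  L : C ⥤ C
  /-- The natural transformation from the identity functor. -/
  η : 𝟭 C ⟶ L
  /-- `L` preserves pushouts of spans of monomorphisms. -/
  preserves_monic_pushouts :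
    ∀ ⦃A B D P : C⦄ (f : A ⟶ B) (g : A ⟶ D) (h : B ⟶ P) (k : D ⟶ P),
      Mono f → Mono g → IsPushout f g h k →
      IsPushout (L.map f) (L.map g) (L.map h) (L.map k)
  /-- Every component of `η` is an epimorphism. -/
  epi_components : ∀ X : C, Epi (η.app X)

open Grph

namespace LassoAux

open Grph

/-- Build a graph homomorphism from edge and vertex maps. -/
def mkHom (A B : Grph) (e : A.obj .zero → B.obj .zero) (v : A.obj .one → B.obj .one)
    (hs : ∀ x, B.map WalkingParallelPairHom.left (e x) = v (A.map WalkingParallelPairHom.left x))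
    (ht : ∀ x, B.map WalkingParallelPairHom.right (e x) = v (A.map WalkingParallelPairHom.right x)) :
    A ⟶ B where
  app x := match x with
    | .zero => TypeCat.ofHom e
    | .one => TypeCat.ofHom v
  naturality X Y f := by
    change WalkingParallelPairHom X Y at f
    cases f with
    | id =>
        show A.map (𝟙 _) ≫ _ = _ ≫ B.map (𝟙 _)
        rw [CategoryTheory.Functor.map_id, CategoryTheory.Functor.map_id,
          Category.id_comp, Category.comp_id]
    | left => ext x; exact (hs x).symm
    | right => ext x; exact (ht x).symm

@[simp] lemma mkHom_app_zero (A B : Grph) (e v hs ht) (x : A.obj .zero) :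
    (mkHom A B e v hs ht).app .zero x = e x := rfl

@[simp] lemma mkHom_app_one (A B : Grph) (e v hs ht) (x : A.obj .one) :
    (mkHom A B e v hs ht).app .one x = v x := rfl

lemma app_surj {A B : Grph} (φ : A ⟶ B) (hE : Epi φ) (x) : Function.Surjective (φ.app x) := by
  haveI : Epi (φ.app x) := (NatTrans.epi_iff_epi_app φ).mp hE x
  exact (epi_iff_surjective _).mp this

lemma mono_of_inj {A B : Grph} (φ : A ⟶ B) (h0 : Function.Injective (φ.app .zero))
    (h1 : Function.Injective (φ.app .one)) : Mono φ := by
  haveI : ∀ x, Mono (φ.app x) := by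
    intro x; rw [CategoryTheory.mono_iff_injective]; cases x; exacts [h0, h1]
  exact NatTrans.mono_of_mono_app φ

/-! ### Concrete graphs -/

/-- The single-edge graph: vertices `false → true`. -/
def GI : Grph := parallelPair (TypeCat.ofHom fun _ : PUnit => false) (TypeCat.ofHom fun _ : PUnit => true)

/-- Two vertices, no edges. -/
def GP2 : Grph := parallelPair (TypeCat.ofHom fun e : Empty => (e.elim : Bool)) (TypeCat.ofHom fun e : Empty => e.elim)

/-- One vertex, no edges. -/
def Gpt : Grph := parallelPair (TypeCat.ofHom fun e : Empty => (e.elim : PUnit)) (TypeCat.ofHom fun e : Empty => e.elim)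

/-- The empty graph. -/
def GE : Grph := parallelPair (TypeCat.ofHom fun e : Empty => (e.elim : Empty)) (TypeCat.ofHom fun e : Empty => e.elim)

/-- Two vertices with an edge in each direction. -/
def GC : Grph := parallelPair (TypeCat.ofHom fun e : Bool => e) (TypeCat.ofHom fun e : Bool => !e)

/-- `GC` with a loop added at vertex `false`. -/
def GK1 : Grph :=
  parallelPair (TypeCat.ofHom fun o : Option Bool => o.elim false id) (TypeCat.ofHom fun o : Option Bool => o.elim false not)

/-- The complete graph (with loops) on two vertices. -/
def GK : Grph :=
  parallelPair (TypeCat.ofHom fun o : Option (Option Bool) => o.elim true (fun o' => o'.elim false id))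
    (TypeCat.ofHom fun o : Option (Option Bool) => o.elim true (fun o' => o'.elim false not))

/-- The edge of `GK` from `x` to `y`. -/
def edgeK : Bool → Bool → Option (Option Bool)
  | false, false => some none
  | false, true => some (some false)
  | true, false => some (some true)
  | true, true => none

lemma srcK_edgeK (x y : Bool) : GK.map WalkingParallelPairHom.left (edgeK x y) = x := by
  cases x <;> cases y <;> rfl

lemma tgtK_edgeK (x y : Bool) : GK.map WalkingParallelPairHom.right (edgeK x y) = y := by
  cases x <;> cases y <;> rfl

/-- Any vertex function into `Bool` extends to a homomorphism into `GK`. -/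
def toK (A : Grph) (v : A.obj .one → Bool) : A ⟶ GK :=
  mkHom A GK
    (fun e => edgeK (v (A.map WalkingParallelPairHom.left e))
      (v (A.map WalkingParallelPairHom.right e))) v
    (fun e => srcK_edgeK _ _) (fun e => tgtK_edgeK _ _)

/-! ### The three pushout squares building `GK` -/

def f1 : GP2 ⟶ GI := mkHom _ _ (fun e => e.elim) (fun w => w) (fun e => e.elim) (fun e => e.elim)
def g1 : GP2 ⟶ GI := mkHom _ _ (fun e => e.elim) (fun w => !w) (fun e => e.elim) (fun e => e.elim)
def h1 : GI ⟶ GC := mkHom _ _ (fun _ => false) (fun w => w) (fun _ => rfl) (fun _ => rfl)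
def k1 : GI ⟶ GC := mkHom _ _ (fun _ => true) (fun w => !w) (fun _ => rfl) (fun _ => rfl)

lemma sq1 : f1 ≫ h1 = g1 ≫ k1 := by
  apply NatTrans.ext; funext x
  cases x with
  | zero => ext e; exact e.elim
  | one => ext w; cases w <;> rfl

lemma pushC : IsPushout f1 g1 h1 k1 := by
  refine IsPushout.of_isColimit (PushoutCocone.IsColimit.mk sq1
    (fun s => mkHom GC s.pt
      (fun e => bif e then s.inr.app .zero PUnit.unit else s.inl.app .zero PUnit.unit)
      (fun w => s.inl.app .one w) ?_ ?_) ?_ ?_ ?_)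
  · intro x
    cases x with
    | false => exact (types_congr_hom (s.inl.naturality WalkingParallelPairHom.left) PUnit.unit).symm
    | true =>
        exact ((types_congr_hom (s.inr.naturality WalkingParallelPairHom.left) PUnit.unit).symm).trans
          (types_congr_hom (NatTrans.congr_app s.condition .one) true).symm
  · intro x
    cases x with
    | false => exact (types_congr_hom (s.inl.naturality WalkingParallelPairHom.right) PUnit.unit).symm
    | true =>
        exact ((types_congr_hom (s.inr.naturality WalkingParallelPairHom.right) PUnit.unit).symm).trans
          (types_congr_hom (NatTrans.congr_app s.condition .one) false).symm
  · intro s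
    apply NatTrans.ext; funext x
    cases x with
    | zero => ext e; rfl
    | one => ext w; rfl
  · intro s
    apply NatTrans.ext; funext x
    cases x with
    | zero => ext e; rfl
    | one =>
        ext w
        cases w with
        | false => exact types_congr_hom (NatTrans.congr_app s.condition .one) true
        | true => exact types_congr_hom (NatTrans.congr_app s.condition .one) false
  · intro s m hm1 hm2
    apply NatTrans.ext; funext x
    cases x with
    | zero =>
        ext e
        cases e with
        | false => exact types_congr_hom (NatTrans.congr_app hm1 .zero) PUnit.unit
        | true => exact types_congr_hom (NatTrans.congr_app hm2 .zero) PUnit.unit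
    | one => ext w; exact types_congr_hom (NatTrans.congr_app hm1 .one) w

def f2 : Gpt ⟶ GC := mkHom _ _ (fun e => e.elim) (fun _ => false) (fun e => e.elim) (fun e => e.elim)
def g2 : Gpt ⟶ oneLoop :=
  mkHom _ _ (fun e => e.elim) (fun _ => PUnit.unit) (fun e => e.elim) (fun e => e.elim)
def h2 : GC ⟶ GK1 := mkHom _ _ (fun e => some e) (fun w => w) (fun _ => rfl) (fun _ => rfl)
def k2 : oneLoop ⟶ GK1 :=
  mkHom _ _ (fun _ => none) (fun _ => false) (fun _ => rfl) (fun _ => rfl)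

lemma sq2 : f2 ≫ h2 = g2 ≫ k2 := by
  apply NatTrans.ext; funext x
  cases x with
  | zero => ext e; exact e.elim
  | one => ext w; rfl

lemma pushK1 : IsPushout f2 g2 h2 k2 := by
  refine IsPushout.of_isColimit (PushoutCocone.IsColimit.mk sq2
    (fun s => mkHom GK1 s.pt
      (fun o => o.elim (s.inr.app .zero PUnit.unit) (fun e => s.inl.app .zero e))
      (fun w => s.inl.app .one w) ?_ ?_) ?_ ?_ ?_)
  · intro o
    cases o with
    | none =>
        exact ((types_congr_hom (s.inr.naturality WalkingParallelPairHom.left) PUnit.unit).symm).trans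
          (types_congr_hom (NatTrans.congr_app s.condition .one) PUnit.unit).symm
    | some e => exact (types_congr_hom (s.inl.naturality WalkingParallelPairHom.left) e).symm
  · intro o
    cases o with
    | none =>
        exact ((types_congr_hom (s.inr.naturality WalkingParallelPairHom.right) PUnit.unit).symm).trans
          (types_congr_hom (NatTrans.congr_app s.condition .one) PUnit.unit).symm
    | some e => exact (types_congr_hom (s.inl.naturality WalkingParallelPairHom.right) e).symm
  · intro s
    apply NatTrans.ext; funext x
    cases x with
    | zero => ext e; rfl
    | one => ext w; rfl
  · intro s
    apply NatTrans.ext; funext x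
    cases x with
    | zero => ext e; rfl
    | one => ext w; exact types_congr_hom (NatTrans.congr_app s.condition .one) PUnit.unit
  · intro s m hm1 hm2
    apply NatTrans.ext; funext x
    cases x with
    | zero =>
        ext o
        cases o with
        | none => exact types_congr_hom (NatTrans.congr_app hm2 .zero) PUnit.unit
        | some e => exact types_congr_hom (NatTrans.congr_app hm1 .zero) e
    | one => ext w; exact types_congr_hom (NatTrans.congr_app hm1 .one) w

def f3 : Gpt ⟶ GK1 := mkHom _ _ (fun e => e.elim) (fun _ => true) (fun e => e.elim) (fun e => e.elim)
def h3 : GK1 ⟶ GK :=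
  mkHom _ _ (fun o => some o) (fun w => w) (fun o => by cases o <;> rfl) (fun o => by cases o <;> rfl)
def k3 : oneLoop ⟶ GK := mkHom _ _ (fun _ => none) (fun _ => true) (fun _ => rfl) (fun _ => rfl)

lemma sq3 : f3 ≫ h3 = g2 ≫ k3 := by
  apply NatTrans.ext; funext x
  cases x with
  | zero => ext e; exact e.elim
  | one => ext w; rfl

lemma pushK : IsPushout f3 g2 h3 k3 := by
  refine IsPushout.of_isColimit (PushoutCocone.IsColimit.mk sq3
    (fun s => mkHom GK s.pt
      (fun o => o.elim (s.inr.app .zero PUnit.unit) (fun o' => s.inl.app .zero o'))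
      (fun w => s.inl.app .one w) ?_ ?_) ?_ ?_ ?_)
  · intro o
    cases o with
    | none =>
        exact ((types_congr_hom (s.inr.naturality WalkingParallelPairHom.left) PUnit.unit).symm).trans
          (types_congr_hom (NatTrans.congr_app s.condition .one) PUnit.unit).symm
    | some o' =>
        cases o' with
        | none => exact (types_congr_hom (s.inl.naturality WalkingParallelPairHom.left) none).symm
        | some e => exact (types_congr_hom (s.inl.naturality WalkingParallelPairHom.left) (some e)).symm
  · intro o
    cases o with
    | none =>
        exact ((types_congr_hom (s.inr.naturality WalkingParallelPairHom.right) PUnit.unit).symm).trans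
          (types_congr_hom (NatTrans.congr_app s.condition .one) PUnit.unit).symm
    | some o' =>
        cases o' with
        | none => exact (types_congr_hom (s.inl.naturality WalkingParallelPairHom.right) none).symm
        | some e => exact (types_congr_hom (s.inl.naturality WalkingParallelPairHom.right) (some e)).symm
  · intro s
    apply NatTrans.ext; funext x
    cases x with
    | zero => ext o; rfl
    | one => ext w; rfl
  · intro s
    apply NatTrans.ext; funext x
    cases x with
    | zero => ext e; rfl
    | one => ext w; exact types_congr_hom (NatTrans.congr_app s.condition .one) PUnit.unit
  · intro s m hm1 hm2
    apply NatTrans.ext; funext x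
    cases x with
    | zero =>
        ext o
        cases o with
        | none => exact types_congr_hom (NatTrans.congr_app hm2 .zero) PUnit.unit
        | some o' => exact types_congr_hom (NatTrans.congr_app hm1 .zero) o'
    | one => ext w; exact types_congr_hom (NatTrans.congr_app hm1 .one) w

/-! ### Iso transfer lemmas -/

lemma isIso_eta (l : Lasso Grph) (A : Grph) (h0 : Function.Injective ((l.η.app A).app .zero))
    (h1 : Function.Injective ((l.η.app A).app .one)) : IsIso (l.η.app A) := by
  haveI : ∀ x, IsIso ((l.η.app A).app x) := by
    intro x
    rw [isIso_iff_bijective]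
    exact ⟨by cases x; exacts [h0, h1], app_surj _ (l.epi_components A) x⟩
  exact NatIso.isIso_of_isIso_app _

lemma isIso_eta_pushout (l : Lasso Grph) {A B D P : Grph} (f : A ⟶ B) (g : A ⟶ D) (h : B ⟶ P)
    (k : D ⟶ P) (mf : Mono f) (mg : Mono g) (hp : IsPushout f g h k)
    (iB : IsIso (l.η.app B)) (iD : IsIso (l.η.app D)) : IsIso (l.η.app P) := by
  haveI := iB; haveI := iD
  have hp' := l.preserves_monic_pushouts f g h k mf mg hp
  haveI := l.epi_components A
  haveI := l.epi_components P
  have nf : f ≫ l.η.app B = l.η.app A ≫ l.L.map f := by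
    simpa using l.η.naturality f
  have ng : g ≫ l.η.app D = l.η.app A ≫ l.L.map g := by
    simpa using l.η.naturality g
  have nh : h ≫ l.η.app P = l.η.app B ≫ l.L.map h := by
    simpa using l.η.naturality h
  have nk : k ≫ l.η.app P = l.η.app D ≫ l.L.map k := by
    simpa using l.η.naturality k
  have w : l.L.map f ≫ inv (l.η.app B) ≫ h = l.L.map g ≫ inv (l.η.app D) ≫ k := by
    rw [← cancel_epi (l.η.app A)]
    calc l.η.app A ≫ l.L.map f ≫ inv (l.η.app B) ≫ h
        = (l.η.app A ≫ l.L.map f) ≫ inv (l.η.app B) ≫ h := by rw [Category.assoc]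
      _ = (f ≫ l.η.app B) ≫ inv (l.η.app B) ≫ h := by rw [nf]
      _ = f ≫ h := by simp
      _ = g ≫ k := hp.w
      _ = (g ≫ l.η.app D) ≫ inv (l.η.app D) ≫ k := by simp
      _ = (l.η.app A ≫ l.L.map g) ≫ inv (l.η.app D) ≫ k := by rw [ng]
      _ = l.η.app A ≫ l.L.map g ≫ inv (l.η.app D) ≫ k := by rw [Category.assoc]
  set θ := hp'.desc (inv (l.η.app B) ≫ h) (inv (l.η.app D) ≫ k) w with hθ
  have hl : l.η.app P ≫ θ = 𝟙 P := by
    apply hp.hom_ext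
    · rw [← Category.assoc, nh, Category.assoc, hθ, hp'.inl_desc]
      simp
    · rw [← Category.assoc, nk, Category.assoc, hθ, hp'.inr_desc]
      simp
  have hr : θ ≫ l.η.app P = 𝟙 (l.L.obj P) := by
    rw [← cancel_epi (l.η.app P), ← Category.assoc, hl]
    simp
  exact ⟨⟨θ, hl, hr⟩⟩

/-! ### The collapse on the single-edge graph -/

lemma eta_collapse_I (l : Lasso Grph)
    (hnt : ∃ G : Grph, ¬ Function.Bijective ((l.η.app G).app .one)) :
    (l.η.app GI).app .one false = (l.η.app GI).app .one true := by
  by_contra hne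
  have hIinj : Function.Injective ((l.η.app GI).app .one) := by
    intro a b hab
    cases a <;> cases b
    · rfl
    · exact absurd hab hne
    · exact absurd hab.symm hne
    · rfl
  have iI : IsIso (l.η.app GI) :=
    isIso_eta l GI (fun (a b : PUnit) _ => Subsingleton.elim a b) hIinj
  have iT : IsIso (l.η.app oneLoop) :=
    isIso_eta l oneLoop (fun (a b : PUnit) _ => Subsingleton.elim a b)
      (fun (a b : PUnit) _ => Subsingleton.elim a b)
  have mf1 : Mono f1 := mono_of_inj _ (fun a => a.elim) (fun a b hab => hab)
  have mg1 : Mono g1 := mono_of_inj _ (fun a => a.elim) (fun a b hab => by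
    have hab' : (!a) = (!b) := hab
    cases a <;> cases b <;> simp_all <;> rfl)
  have iC : IsIso (l.η.app GC) := isIso_eta_pushout l f1 g1 h1 k1 mf1 mg1 pushC iI iI
  have mf2 : Mono f2 := mono_of_inj _ (fun a => a.elim) (fun (a b : PUnit) _ => Subsingleton.elim a b)
  have mg2 : Mono g2 := mono_of_inj _ (fun a => a.elim) (fun (a b : PUnit) _ => Subsingleton.elim a b)
  have iK1 : IsIso (l.η.app GK1) := isIso_eta_pushout l f2 g2 h2 k2 mf2 mg2 pushK1 iC iT
  have mf3 : Mono f3 := mono_of_inj _ (fun a => a.elim) (fun (a b : PUnit) _ => Subsingleton.elim a b)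
  have iK : IsIso (l.η.app GK) := isIso_eta_pushout l f3 g2 h3 k3 mf3 mg2 pushK iK1 iT
  obtain ⟨G₀, hG₀⟩ := hnt
  have hsur := app_surj (l.η.app G₀) (l.epi_components G₀) .one
  have hninj : ¬ Function.Injective ((l.η.app G₀).app .one) := fun hi => hG₀ ⟨hi, hsur⟩
  obtain ⟨u, v, huv, hne'⟩ := Function.not_injective_iff.mp hninj
  classical
  set φ : G₀ ⟶ GK := toK G₀ (fun w => if w = v then true else false) with hφ
  have nat := fun (w : G₀.obj .one) =>
    types_congr_hom (NatTrans.congr_app (l.η.naturality φ) .one) w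
  have hKeq : (l.η.app GK).app .one (φ.app .one u) = (l.η.app GK).app .one (φ.app .one v) := by
    have e1' : (l.η.app GK).app .one (φ.app .one u)
        = (l.L.map φ).app .one ((l.η.app G₀).app .one u) := nat u
    have e2' : (l.η.app GK).app .one (φ.app .one v)
        = (l.L.map φ).app .one ((l.η.app G₀).app .one v) := nat v
    rw [e1', e2', huv]
  haveI := iK
  haveI : IsIso ((l.η.app GK).app .one) := inferInstance
  have hKinj := ((isIso_iff_bijective ((l.η.app GK).app .one)).mp this).1
  have : (if u = v then true else false) = (if v = v then true else false) := hKinj hKeq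
  simp [hne'] at this

/-- Every edge has its endpoints collapsed by `η`. -/
lemma edge_collapse (l : Lasso Grph)
    (hnt : ∃ G : Grph, ¬ Function.Bijective ((l.η.app G).app .one)) (G : Grph)
    (e : G.obj .zero) :
    (l.η.app G).app .one (G.map WalkingParallelPairHom.left e)
      = (l.η.app G).app .one (G.map WalkingParallelPairHom.right e) := by
  let φ : GI ⟶ G := mkHom GI G (fun _ => e)
    (fun b => bif b then G.map WalkingParallelPairHom.right e
      else G.map WalkingParallelPairHom.left e)
    (fun _ => rfl) (fun _ => rfl)
  have nat := fun (b : Bool) =>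
    types_congr_hom (NatTrans.congr_app (l.η.naturality φ) .one) b
  have nf : (l.η.app G).app .one (G.map WalkingParallelPairHom.left e)
      = (l.L.map φ).app .one ((l.η.app GI).app .one false) := nat false
  have nt : (l.η.app G).app .one (G.map WalkingParallelPairHom.right e)
      = (l.L.map φ).app .one ((l.η.app GI).app .one true) := nat true
  rw [nf, nt, eta_collapse_I l hnt]

/-- `η` never collapses vertices in different connected components. -/
lemma eta_separates (l : Lasso Grph) (G : Grph) (u v : G.obj .one)
    (huv : (l.η.app G).app .one u = (l.η.app G).app .one v) : G.connRel u v := by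
  by_contra hcon
  classical
  set p : G.obj .one → Prop := G.connRel u with hp
  have key : ∀ e : G.obj .zero, p (G.map WalkingParallelPairHom.left e) →
      p (G.map WalkingParallelPairHom.right e) := fun e h =>
    Relation.EqvGen.trans _ _ _ h (Relation.EqvGen.rel _ _ ⟨e, rfl, rfl⟩)
  have key' : ∀ e : G.obj .zero, p (G.map WalkingParallelPairHom.right e) →
      p (G.map WalkingParallelPairHom.left e) := fun e h =>
    Relation.EqvGen.trans _ _ _ h (Relation.EqvGen.symm _ _ (Relation.EqvGen.rel _ _ ⟨e, rfl, rfl⟩))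
  let G₁ : Grph := parallelPair
    (TypeCat.ofHom fun e : {e : G.obj .zero // p (G.map WalkingParallelPairHom.left e)} =>
      (⟨G.map WalkingParallelPairHom.left e.1, e.2⟩ : {w // p w}))
    (TypeCat.ofHom fun e => ⟨G.map WalkingParallelPairHom.right e.1, key e.1 e.2⟩)
  let G₂ : Grph := parallelPair
    (TypeCat.ofHom fun e : {e : G.obj .zero // ¬ p (G.map WalkingParallelPairHom.left e)} =>
      (⟨G.map WalkingParallelPairHom.left e.1, e.2⟩ : {w // ¬ p w}))
    (TypeCat.ofHom fun e => ⟨G.map WalkingParallelPairHom.right e.1, fun hr => e.2 (key' e.1 hr)⟩)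
  let ι₁ : G₁ ⟶ G := mkHom _ _ Subtype.val Subtype.val (fun _ => rfl) (fun _ => rfl)
  let ι₂ : G₂ ⟶ G := mkHom _ _ Subtype.val Subtype.val (fun _ => rfl) (fun _ => rfl)
  let ε₁ : GE ⟶ G₁ := mkHom _ _ (fun a => a.elim) (fun a => a.elim)
    (fun a => a.elim) (fun a => a.elim)
  let ε₂ : GE ⟶ G₂ := mkHom _ _ (fun a => a.elim) (fun a => a.elim)
    (fun a => a.elim) (fun a => a.elim)
  have sq : ε₁ ≫ ι₁ = ε₂ ≫ ι₂ := by
    apply NatTrans.ext; funext x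
    cases x with
    | zero => ext y; exact y.elim
    | one => ext y; exact y.elim
  have hpo : IsPushout ε₁ ε₂ ι₁ ι₂ := by
    refine IsPushout.of_isColimit (PushoutCocone.IsColimit.mk sq
      (fun s => mkHom G s.pt
        (fun e => if he : p (G.map WalkingParallelPairHom.left e) then s.inl.app .zero ⟨e, he⟩
          else s.inr.app .zero ⟨e, he⟩)
        (fun w => if hw : p w then s.inl.app .one ⟨w, hw⟩ else s.inr.app .one ⟨w, hw⟩)
        ?_ ?_) ?_ ?_ ?_)
    · intro e
      dsimp only
      by_cases he : p (G.map WalkingParallelPairHom.left e)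
      · rw [dif_pos he, dif_pos he]
        exact (types_congr_hom (s.inl.naturality WalkingParallelPairHom.left) ⟨e, he⟩).symm
      · rw [dif_neg he, dif_neg he]
        exact (types_congr_hom (s.inr.naturality WalkingParallelPairHom.left) ⟨e, he⟩).symm
    · intro e
      dsimp only
      by_cases he : p (G.map WalkingParallelPairHom.left e)
      · rw [dif_pos he, dif_pos (key e he)]
        exact (types_congr_hom (s.inl.naturality WalkingParallelPairHom.right) ⟨e, he⟩).symm
      · rw [dif_neg he, dif_neg (fun hr => he (key' e hr))]
        exact (types_congr_hom (s.inr.naturality WalkingParallelPairHom.right) ⟨e, he⟩).symm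
    · intro s
      apply NatTrans.ext; funext x
      cases x with
      | zero => ext e; exact dif_pos e.2
      | one => ext w; exact dif_pos w.2
    · intro s
      apply NatTrans.ext; funext x
      cases x with
      | zero => ext e; exact dif_neg e.2
      | one => ext w; exact dif_neg w.2
    · intro s m hm1 hm2
      apply NatTrans.ext; funext x
      cases x with
      | zero =>
          ext e
          simp only [TypeCat.Fun.toFun_apply, mkHom_app_zero]
          by_cases he : p (G.map WalkingParallelPairHom.left e)
          · rw [dif_pos he]
            exact types_congr_hom (NatTrans.congr_app hm1 .zero) ⟨e, he⟩
          · rw [dif_neg he]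
            exact types_congr_hom (NatTrans.congr_app hm2 .zero) ⟨e, he⟩
      | one =>
          ext w
          simp only [TypeCat.Fun.toFun_apply, mkHom_app_one]
          by_cases hw : p w
          · rw [dif_pos hw]
            exact types_congr_hom (NatTrans.congr_app hm1 .one) ⟨w, hw⟩
          · rw [dif_neg hw]
            exact types_congr_hom (NatTrans.congr_app hm2 .one) ⟨w, hw⟩
  have mε₁ : Mono ε₁ := mono_of_inj _ (fun a => a.elim) (fun a => a.elim)
  have mε₂ : Mono ε₂ := mono_of_inj _ (fun a => a.elim) (fun a => a.elim)
  have hp' := l.preserves_monic_pushouts ε₁ ε₂ ι₁ ι₂ mε₁ mε₂ hpo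
  have hE : ∀ x, IsEmpty ((l.L.obj GE).obj x) := by
    intro x
    constructor
    intro y
    obtain ⟨e, -⟩ := app_surj (l.η.app GE) (l.epi_components GE) x y
    cases x <;> exact e.elim
  have wc : l.L.map ε₁ ≫ toK (l.L.obj G₁) (fun _ => false)
      = l.L.map ε₂ ≫ toK (l.L.obj G₂) (fun _ => true) := by
    apply NatTrans.ext; funext x
    ext y
    exact ((hE x).false y).elim
  set c := hp'.desc _ _ wc with hc
  have hu : p u := Relation.EqvGen.refl u
  have nat1 := types_congr_hom (NatTrans.congr_app (l.η.naturality ι₁) .one) (⟨u, hu⟩ : {w // p w})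
  have nat2 := types_congr_hom (NatTrans.congr_app (l.η.naturality ι₂) .one) (⟨v, hcon⟩ : {w // ¬ p w})
  have nat1' : (l.η.app G).app .one u
      = (l.L.map ι₁).app .one ((l.η.app G₁).app .one ⟨u, hu⟩) := nat1
  have nat2' : (l.η.app G).app .one v
      = (l.L.map ι₂).app .one ((l.η.app G₂).app .one ⟨v, hcon⟩) := nat2
  have c1 := types_congr_hom (NatTrans.congr_app (hp'.inl_desc _ _ wc) .one)
    ((l.η.app G₁).app .one ⟨u, hu⟩)
  have c2 := types_congr_hom (NatTrans.congr_app (hp'.inr_desc _ _ wc) .one)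
    ((l.η.app G₂).app .one ⟨v, hcon⟩)
  have cfalse : c.app .one ((l.η.app G).app .one u) = false := by
    rw [nat1']; exact c1
  have ctrue : c.app .one ((l.η.app G).app .one v) = true := by
    rw [nat2']; exact c2
  rw [huv, ctrue] at cfalse
  exact Bool.noConfusion cfalse

end LassoAux


open LassoAux

theorem stmt7 (l : Lasso Grph)
    (h : ∃ G : Grph, ¬ Function.Bijective ((l.η.app G).app .one)) (G : Grph) :
    (∀ u v : G.obj .one, (l.η.app G).app .one u = (l.η.app G).app .one v ↔ G.connRel u v)
    ∧ Function.Surjective ((l.η.app G).app .one)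
    ∧ ∀ e : (l.L.obj G).obj .zero,
        (l.L.obj G).map WalkingParallelPairHom.left e
          = (l.L.obj G).map WalkingParallelPairHom.right e := by
  refine ⟨fun u v => ⟨fun huv => eta_separates l G u v huv, fun hc => ?_⟩,
    app_surj _ (l.epi_components G) .one, fun e' => ?_⟩
  · induction hc with
    | rel a b hr =>
        obtain ⟨e, he1, he2⟩ := hr
        rw [← he1, ← he2]
        exact edge_collapse l h G e
    | refl a => rfl
    | symm a b _ ih => exact ih.symm
    | trans a b c _ _ ih1 ih2 => exact ih1.trans ih2
  · obtain ⟨e, rfl⟩ := app_surj _ (l.epi_components G) .zero e'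
    have n1 := types_congr_hom ((l.η.app G).naturality WalkingParallelPairHom.left) e
    have n2 := types_congr_hom ((l.η.app G).naturality WalkingParallelPairHom.right) e
    have n1' : (l.η.app G).app .one (G.map WalkingParallelPairHom.left e)
        = (l.L.obj G).map WalkingParallelPairHom.left ((l.η.app G).app .zero e) := n1
    have n2' : (l.η.app G).app .one (G.map WalkingParallelPairHom.right e)
        = (l.L.obj G).map WalkingParallelPairHom.right ((l.η.app G).app .zero e) := n2
    rw [← n1', ← n2']
    exact edge_collapse l h G e
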